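/- Let c be a Coxeter element of W with X, Ξ as above, s = |X ∩ [1,n]| and t = |Ξ ∩ [1,n]|, and let (i,j) be a reflection dividing c. Consider the orbit of (i,j) under the map r ↦ c r c⁻¹ (which preserves the set of reflections dividing c). If i and j both lie in X, this orbit is finite with exactly s elements; if i and j both lie in Ξ, it is finite with exactly t elements; and if one of i,j lies in X and the other in Ξ, it is infinite. -/

import Mathlib

/-- `w` is an `n`-periodic permutation of `ℤ`. -/
def IsPeriodic (n : ℕ) (w : Equiv.Perm ℤ) : Prop :=
  ∀ x : ℤ, w (x + n) = w x + n

/-- `n` times the shift of the permutation `w`. -/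
noncomputable def shiftSum (n : ℕ) (w : Equiv.Perm ℤ) : ℤ :=
  ∑ x ∈ Finset.Icc (1 : ℤ) (n : ℤ), (w x - x)

/-- Membership in the group `W` of type `Ã_{n-1}`: the `n`-periodic
permutations of `ℤ` of shift `0`. -/
def InAffineW (n : ℕ) (w : Equiv.Perm ℤ) : Prop :=
  IsPeriodic n w ∧ shiftSum n w = 0

/-- `w` is the `n`-periodic transposition `(a, b)`. -/
def IsTransposition (n : ℕ) (a b : ℤ) (w : Equiv.Perm ℤ) : Prop :=
  (∀ k : ℤ, w (a + k * n) = b + k * n) ∧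
  (∀ k : ℤ, w (b + k * n) = a + k * n) ∧
  (∀ x : ℤ, ¬ (n : ℤ) ∣ (x - a) → ¬ (n : ℤ) ∣ (x - b) → w x = x)

/-- `w` is a reflection of `W`. -/
def IsReflection (n : ℕ) (w : Equiv.Perm ℤ) : Prop :=
  ∃ a b : ℤ, ¬ (n : ℤ) ∣ (a - b) ∧ IsTransposition n a b w

/-- The reflection length `l_R` of an element of `W`. -/
noncomputable def reflLength (n : ℕ) (w : Equiv.Perm ℤ) : ℕ :=
  sInf {m | ∃ L : List (Equiv.Perm ℤ), L.length = m ∧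
    (∀ r ∈ L, IsReflection n r) ∧ L.prod = w}

/-- `v ≼ w` : `v` divides `w` with respect to the reflection length. -/
def RDvd (n : ℕ) (v w : Equiv.Perm ℤ) : Prop :=
  reflLength n w = reflLength n v + reflLength n (v⁻¹ * w)

/-- `w` is the `n`-periodic cycle `(L)_{[h]}` : it sends the `i`-th entry of `L`
(translated by `k * n`) to the `(i+1)`-th one, the last entry to the first one
shifted by `h * n`, and fixes every integer not congruent mod `n` to an entry of `L`. -/
def IsCycleList (n : ℕ) (L : List ℤ) (h : ℤ) (w : Equiv.Perm ℤ) : Prop :=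
  (∀ i : ℕ, i + 1 < L.length → ∀ k : ℤ,
      w (L.getD i 0 + k * n) = L.getD (i + 1) 0 + k * n) ∧
  (∀ hL : L ≠ [], ∀ k : ℤ, w (L.getLast hL + k * n) = L.head hL + (h + k) * n) ∧
  (∀ x : ℤ, (∀ a ∈ L, ¬ (n : ℤ) ∣ (x - a)) → w x = x)

/-- `c` is a Coxeter element of `W` : a product of the Coxeter generators
`s_1, …, s_n` (where `s_i = (i, i+1)`), each occurring exactly once, in some order. -/
def IsCoxeter (n : ℕ) (c : Equiv.Perm ℤ) : Prop :=
  ∃ s : Fin n → Equiv.Perm ℤ,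
    (∀ i : Fin n, IsTransposition n ((i : ℤ) + 1) ((i : ℤ) + 2) (s i)) ∧
    ∃ e : Equiv.Perm (Fin n), c = (List.ofFn (fun j => s (e j))).prod

/-- The data of a decomposition `c = (a_1,…,a_s)_{[1]} ∘ (α_t,…,α_1)_{[-1]}` of a
Coxeter element, for a partition `{1,…,n} = {a_1<…<a_s} ⊔ {α_1<…<α_t}` into two
nonempty parts. -/
structure CoxeterDecomp (n : ℕ) (c : Equiv.Perm ℤ) where
  s : ℕ
  t : ℕ
  a : ℕ → ℤ
  al : ℕ → ℤ
  u : Equiv.Perm ℤ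
  v : Equiv.Perm ℤ
  hs : 1 ≤ s
  ht : 1 ≤ t
  hst : s + t = n
  ha_mono : ∀ i j, 1 ≤ i → i < j → j ≤ s → a i < a j
  hal_mono : ∀ i j, 1 ≤ i → i < j → j ≤ t → al i < al j
  ha_mem : ∀ i, 1 ≤ i → i ≤ s → 1 ≤ a i ∧ a i ≤ n
  hal_mem : ∀ i, 1 ≤ i → i ≤ t → 1 ≤ al i ∧ al i ≤ n
  hdisj : ∀ i j, 1 ≤ i → i ≤ s → 1 ≤ j → j ≤ t → a i ≠ al j
  hcover : ∀ x : ℤ, 1 ≤ x → x ≤ n →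
      (∃ i, 1 ≤ i ∧ i ≤ s ∧ a i = x) ∨ (∃ j, 1 ≤ j ∧ j ≤ t ∧ al j = x)
  hu : IsCycleList n ((List.range' 1 s).map a) 1 u
  hv : IsCycleList n (((List.range' 1 t).map al).reverse) (-1) v
  hc : c = u * v

/-- The set `{f 1, …, f s} + nℤ`. -/
def latticeSet (n : ℕ) (s : ℕ) (f : ℕ → ℤ) : Set ℤ :=
  {x | ∃ i : ℕ, 1 ≤ i ∧ i ≤ s ∧ ∃ k : ℤ, x = f i + k * n}


/-!
Conjugating the reflection `(x, y)` by a periodic `w` gives `(w x, w y)`. The Coxeter element `c`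
moves `a_1 → a_2 → ⋯ → a_s → a_1 + n` and `α_t → α_{t-1} → ⋯ → α_1 → α_t - n`, so `X` and `Ξ` can
be enumerated as `E m` and `F m` with `c (E m) = E (m + 1)`, `E (m + s) = E m + n`,
`c (F m) = F (m + 1)` and `F (m + t) = F m - n`. For `i = E m₁`, `j = E m₂` the `k`-th and `l`-th
conjugates of `(i, j)` coincide iff `s ∣ k - l`, whence exactly `s` of them. For `i = E m₁`,
`j = F m₂` a coincidence forces `k - l = s μ = -t μ`, hence `k = l`: the orbit is infinite.
-/

lemma Int.eq_of_dvd_sub_of_mem_Icc {n x y : ℤ} (hx : x ∈ Set.Icc 1 n) (hy : y ∈ Set.Icc 1 n)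
    (h : n ∣ x - y) : x = y := by
  have := Int.eq_zero_of_abs_lt_dvd h (by rw [abs_sub_lt_iff]; grind)
  omega

lemma dvd_sub_add_mul_iff {n x a μ : ℤ} : n ∣ x - (a + μ * n) ↔ n ∣ x - a := by
  rw [show x - (a + μ * n) = x - a - μ * n by ring]
  exact dvd_sub_left (dvd_mul_left n μ)

section Periodic

variable {n : ℕ} {w w' : Equiv.Perm ℤ}

lemma isPeriodic_iff_commute : IsPeriodic n w ↔ Commute w (Equiv.addRight (n : ℤ)) := by
  simp [IsPeriodic, Commute, SemiconjBy, Equiv.ext_iff]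

lemma IsPeriodic.mul (hw : IsPeriodic n w) (hw' : IsPeriodic n w') : IsPeriodic n (w * w') :=
  isPeriodic_iff_commute.2 <| (isPeriodic_iff_commute.1 hw).mul_left (isPeriodic_iff_commute.1 hw')

lemma IsPeriodic.zpow (hw : IsPeriodic n w) (k : ℤ) : IsPeriodic n (w ^ k) :=
  isPeriodic_iff_commute.2 <| (isPeriodic_iff_commute.1 hw).zpow_left k

lemma IsPeriodic.apply_add_mul (hw : IsPeriodic n w) (x k : ℤ) : w (x + k * n) = w x + k * n := by
  induction k using Int.induction_on generalizing x with
  | zero => simp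
  | succ k ih => rw [add_one_mul, ← add_assoc, hw, ih]; ring
  | pred k ih =>
    have := hw (x + (-(k : ℤ) - 1) * n)
    rw [show x + (-(k : ℤ) - 1) * n + n = x + -(k : ℤ) * n by ring, ih] at this
    linarith

lemma IsPeriodic.dvd_apply_sub_apply (hw : IsPeriodic n w) {x y : ℤ} (h : (n : ℤ) ∣ x - y) :
    (n : ℤ) ∣ w x - w y := by
  obtain ⟨μ, hμ⟩ := h
  rw [show x = y + μ * n by linarith, hw.apply_add_mul]
  exact ⟨μ, by ring⟩

end Periodic

namespace IsTransposition

variable {n : ℕ} {a b a' b' : ℤ} {r r' w : Equiv.Perm ℤ}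

lemma symm (hr : IsTransposition n a b r) : IsTransposition n b a r :=
  ⟨hr.2.1, hr.1, fun x hb ha => hr.2.2 x ha hb⟩

lemma add_mul (hr : IsTransposition n a b r) (μ : ℤ) :
    IsTransposition n (a + μ * n) (b + μ * n) r := by
  refine ⟨fun k => ?_, fun k => ?_, fun x ha hb =>
    hr.2.2 x (fun h => ha (dvd_sub_add_mul_iff.2 h)) (fun h => hb (dvd_sub_add_mul_iff.2 h))⟩
  · rw [add_assoc, ← _root_.add_mul, hr.1, _root_.add_mul, add_assoc]
  · rw [add_assoc, ← _root_.add_mul, hr.2.1, _root_.add_mul, add_assoc]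

lemma unique (hr : IsTransposition n a b r) (hr' : IsTransposition n a b r') : r = r' := by
  ext x
  by_cases ha : (n : ℤ) ∣ x - a
  · obtain ⟨k, hk⟩ := ha
    rw [show x = a + k * n by linarith, hr.1, hr'.1]
  by_cases hb : (n : ℤ) ∣ x - b
  · obtain ⟨k, hk⟩ := hb
    rw [show x = b + k * n by linarith, hr.2.1, hr'.2.1]
  rw [hr.2.2 x ha hb, hr'.2.2 x ha hb]

lemma conj (hr : IsTransposition n a b r) (hw : IsPeriodic n w) :
    IsTransposition n (w a) (w b) (w * r * w⁻¹) := by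
  have hinv : ∀ x k : ℤ, w⁻¹ (w x + k * n) = x + k * n := fun x k => by
    rw [← hw.apply_add_mul]; simp
  refine ⟨fun k => ?_, fun k => ?_, fun x ha hb => ?_⟩
  · simp only [Equiv.Perm.mul_apply, hinv, hr.1, hw.apply_add_mul]
  · simp only [Equiv.Perm.mul_apply, hinv, hr.2.1, hw.apply_add_mul]
  · have hdvd : ∀ y, ¬ (n : ℤ) ∣ x - w y → ¬ (n : ℤ) ∣ w⁻¹ x - y := fun y hy h => hy <| by
      simpa using hw.dvd_apply_sub_apply h
    rw [Equiv.Perm.mul_apply, Equiv.Perm.mul_apply, hr.2.2 _ (hdvd a ha) (hdvd b hb)]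
    simp

lemma exists_add_mul_eq (hr : IsTransposition n a b r) (hr' : IsTransposition n a' b' r)
    (hne : a' ≠ b') :
    ∃ μ : ℤ, (a' = a + μ * n ∧ b' = b + μ * n) ∨ (a' = b + μ * n ∧ b' = a + μ * n) := by
  have hra' : r a' = b' := by simpa using hr'.1 0
  by_cases ha : (n : ℤ) ∣ a' - a
  · obtain ⟨μ, hμ⟩ := ha
    have ha' : a' = a + μ * n := by linarith
    exact ⟨μ, .inl ⟨ha', by rw [← hra', ha', hr.1]⟩⟩
  by_cases hb : (n : ℤ) ∣ a' - b
  · obtain ⟨μ, hμ⟩ := hb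
    have ha' : a' = b + μ * n := by linarith
    exact ⟨μ, .inr ⟨ha', by rw [← hra', ha', hr.2.1]⟩⟩
  exact absurd (hra' ▸ hr.2.2 a' ha hb) hne.symm

end IsTransposition

/-- The integers congruent mod `n` to an entry of `L`, listed in the order in which the cycle
`(L)_{[h]}` moves them (see `IsCycleList.apply_cycleEnum`). -/
def cycleEnum (n : ℕ) (L : List ℤ) (h m : ℤ) : ℤ :=
  L.getD (m % L.length).toNat 0 + h * (m / L.length) * n

section CycleEnum

variable {n : ℕ} {L M : List ℤ} {h h' : ℤ}

lemma cycleEnum_eq (hL : L ≠ []) (m : ℤ) :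
    ∃ (q : ℕ) (hq : q < L.length) (K : ℤ),
      m = q + L.length * K ∧ cycleEnum n L h m = L[q] + h * K * n := by
  have hlen : (0 : ℤ) < L.length := by simpa [List.length_pos_iff] using hL
  have hq0 := Int.emod_nonneg m hlen.ne'
  have hq : (m % L.length).toNat < L.length := by have := Int.emod_lt_of_pos m hlen; omega
  refine ⟨_, hq, m / L.length, ?_, by rw [cycleEnum, List.getD_eq_getElem _ _ hq]⟩
  rw [Int.toNat_of_nonneg hq0, Int.emod_add_mul_ediv]

lemma cycleEnum_add_mul (hL : L ≠ []) (m μ : ℤ) :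
    cycleEnum n L h (m + L.length * μ) = cycleEnum n L h m + h * μ * n := by
  have hlen : (L.length : ℤ) ≠ 0 := by simpa using hL
  simp only [cycleEnum, Int.add_mul_emod_self_left, Int.add_mul_ediv_left _ _ hlen]
  ring

lemma cycleEnum_natCast {q : ℕ} (hq : q < L.length) : cycleEnum n L h q = L[q] := by
  have hq' : (q : ℤ) < L.length := by exact_mod_cast hq
  rw [cycleEnum, Int.emod_eq_of_lt (by omega) hq', Int.ediv_eq_zero_of_lt (by omega) hq']
  simp [hq]

lemma exists_mem_dvd_sub_cycleEnum (hL : L ≠ []) (m : ℤ) :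
    ∃ b ∈ L, (n : ℤ) ∣ cycleEnum n L h m - b := by
  obtain ⟨q, hq, K, -, hE⟩ := cycleEnum_eq (n := n) (h := h) hL m
  exact ⟨L[q], List.getElem_mem hq, ⟨h * K, by rw [hE]; ring⟩⟩

lemma exists_cycleEnum_eq (ε : ℤˣ) {b : ℤ} (hb : b ∈ L) (k : ℤ) :
    ∃ m, cycleEnum n L ε m = b + k * n := by
  obtain ⟨q, hq, rfl⟩ := List.getElem_of_mem hb
  refine ⟨q + L.length * (ε * k), ?_⟩
  rw [cycleEnum_add_mul (List.ne_nil_of_mem hb), cycleEnum_natCast hq, ← mul_assoc,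
    ← Units.val_mul, Int.units_mul_self, Units.val_one, one_mul]

lemma cycleEnum_injective (hn : n ≠ 0) (hh : h ≠ 0) (hL : L ≠ [])
    (hpw : L.Pairwise fun x y => ¬ (n : ℤ) ∣ x - y) : Function.Injective (cycleEnum n L h) := by
  intro m m' hmm'
  obtain ⟨q, hq, K, rfl, hE⟩ := cycleEnum_eq (n := n) (h := h) hL m
  obtain ⟨q', hq', K', rfl, hE'⟩ := cycleEnum_eq (n := n) (h := h) hL m'
  rw [hE, hE'] at hmm'
  have hdvd : (n : ℤ) ∣ L[q] - L[q'] := ⟨h * (K' - K), by linear_combination hmm'⟩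
  obtain rfl : q = q' := by
    by_contra hne
    rcases Nat.lt_or_gt_of_ne hne with hlt | hlt
    · exact List.pairwise_iff_getElem.1 hpw q q' hq hq' hlt hdvd
    · exact List.pairwise_iff_getElem.1 hpw q' q hq' hq hlt (by simpa using hdvd.neg_right)
  have : h * n * K = h * n * K' := by linear_combination hmm'
  rw [mul_left_cancel₀ (mul_ne_zero hh (by exact_mod_cast hn)) this]

lemma not_dvd_cycleEnum_sub (hL : L ≠ []) (hLM : ∀ x ∈ L, ∀ y ∈ M, ¬ (n : ℤ) ∣ x - y) (m : ℤ)
    {y : ℤ} (hy : y ∈ M) : ¬ (n : ℤ) ∣ cycleEnum n L h m - y := fun hd => by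
  obtain ⟨b, hb, hdvd⟩ := exists_mem_dvd_sub_cycleEnum (h := h) hL m
  exact hLM b hb y hy (by simpa using dvd_sub hd hdvd)

lemma not_dvd_cycleEnum_sub_cycleEnum (hL : L ≠ []) (hM : M ≠ [])
    (hLM : ∀ x ∈ L, ∀ y ∈ M, ¬ (n : ℤ) ∣ x - y) (m m' : ℤ) :
    ¬ (n : ℤ) ∣ cycleEnum n L h m - cycleEnum n M h' m' := fun hd => by
  obtain ⟨y, hy, hdvd⟩ := exists_mem_dvd_sub_cycleEnum (h := h') hM m'
  exact not_dvd_cycleEnum_sub hL hLM m hy (by simpa using dvd_add hd hdvd)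

lemma IsCycleList.apply_cycleEnum {w : Equiv.Perm ℤ} (hw : IsCycleList n L h w) (hL : L ≠ [])
    (m : ℤ) : w (cycleEnum n L h m) = cycleEnum n L h (m + 1) := by
  obtain ⟨q, hq, K, rfl, hE⟩ := cycleEnum_eq (n := n) (h := h) hL m
  rw [hE]
  rcases Nat.lt_or_ge (q + 1) L.length with hq1 | hq1
  · have := hw.1 q hq1 (h * K)
    rw [List.getD_eq_getElem _ _ hq, List.getD_eq_getElem _ _ hq1] at this
    rw [this, show (q : ℤ) + L.length * K + 1 = ((q + 1 : ℕ) : ℤ) + L.length * K by push_cast; ring,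
      cycleEnum_add_mul hL, cycleEnum_natCast hq1]
  · have hlast : (q : ℤ) + 1 = L.length := by omega
    have := hw.2.1 hL (h * K)
    rw [List.getLast_eq_getElem, List.head_eq_getElem] at this
    simp only [show L.length - 1 = q by omega] at this
    rw [this, show (q : ℤ) + L.length * K + 1 = ((0 : ℕ) : ℤ) + L.length * (K + 1) by
      push_cast; linear_combination hlast, cycleEnum_add_mul hL,
      cycleEnum_natCast (List.length_pos_iff.2 hL)]
    ring

lemma IsCycleList.isPeriodic {ε : ℤˣ} {w : Equiv.Perm ℤ} (hw : IsCycleList n L ε w) :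
    IsPeriodic n w := by
  intro x
  by_cases hx : ∃ b ∈ L, (n : ℤ) ∣ x - b
  · obtain ⟨b, hb, k, hk⟩ := hx
    have hL := List.ne_nil_of_mem hb
    obtain ⟨m, hm⟩ := exists_cycleEnum_eq (n := n) ε hb k
    have hshift : ∀ m, cycleEnum n L ε (m + L.length * ε) = cycleEnum n L ε m + n := fun m => by
      rw [cycleEnum_add_mul hL, ← Units.val_mul, Int.units_mul_self, Units.val_one, one_mul]
    rw [show x = cycleEnum n L ε m by linarith, ← hshift, hw.apply_cycleEnum hL,
      hw.apply_cycleEnum hL, ← hshift, add_right_comm]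
  · simp only [not_exists, not_and] at hx
    rw [hw.2.2 x hx, hw.2.2 (x + n) fun b hb hd => hx b hb ?_]
    rw [show x - b = x + n - b - n by ring]
    exact dvd_sub hd dvd_rfl

end CycleEnum

/-- Abstracts the enumerations of `X` (`ε = 1`) and `Ξ` (`ε = -1`) in which the Coxeter element
acts as `m ↦ m + 1`. -/
structure IsOrbitEnum (n : ℕ) (w : Equiv.Perm ℤ) (ℓ : ℕ) (ε : ℤˣ) (E : ℤ → ℤ) : Prop where
  injective : Function.Injective E
  apply_eq : ∀ m, w (E m) = E (m + 1)
  add_mul : ∀ m μ, E (m + ℓ * μ) = E m + ε * μ * n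

lemma IsCycleList.isOrbitEnum {n : ℕ} {L : List ℤ} {ε : ℤˣ} {w : Equiv.Perm ℤ}
    (hw : IsCycleList n L ε w) (hn : n ≠ 0) (hL : L ≠ [])
    (hpw : L.Pairwise fun x y => ¬ (n : ℤ) ∣ x - y) :
    IsOrbitEnum n w L.length ε (cycleEnum n L ε) :=
  ⟨cycleEnum_injective hn ε.ne_zero hL hpw, hw.apply_cycleEnum hL, cycleEnum_add_mul hL⟩

namespace IsOrbitEnum

variable {n ℓ ℓ' : ℕ} {ε ε' : ℤˣ} {E F : ℤ → ℤ} {u v w r : Equiv.Perm ℤ}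

lemma mul_right (hE : IsOrbitEnum n u ℓ ε E) (hv : ∀ m, v (E m) = E m) :
    IsOrbitEnum n (u * v) ℓ ε E :=
  ⟨hE.injective, fun m => by rw [Equiv.Perm.mul_apply, hv, hE.apply_eq], hE.add_mul⟩

lemma mul_left (hE : IsOrbitEnum n v ℓ ε E) (hu : ∀ m, u (E m) = E m) :
    IsOrbitEnum n (u * v) ℓ ε E :=
  ⟨hE.injective, fun m => by rw [Equiv.Perm.mul_apply, hE.apply_eq, hu], hE.add_mul⟩

lemma zpow_apply (hE : IsOrbitEnum n w ℓ ε E) (k m : ℤ) : (w ^ k) (E m) = E (m + k) := by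
  induction k using Int.induction_on generalizing m with
  | zero => simp
  | succ k ih => rw [zpow_add_one, Equiv.Perm.mul_apply, hE.apply_eq, ih]; ring_nf
  | pred k ih =>
    have hinv : w⁻¹ (E m) = E (m - 1) :=
      Equiv.Perm.inv_eq_iff_eq.2 (by rw [hE.apply_eq, sub_add_cancel])
    rw [zpow_sub_one, Equiv.Perm.mul_apply, hinv, ih]
    ring_nf

lemma add_mul_eq (hE : IsOrbitEnum n w ℓ ε E) (m μ : ℤ) :
    E m + μ * n = E (m + ℓ * (ε * μ)) := by
  rw [hE.add_mul, ← mul_assoc, ← Units.val_mul, Int.units_mul_self, Units.val_one, one_mul]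

lemma isTransposition_conj_zpow (hE : IsOrbitEnum n w ℓ ε E) (hF : IsOrbitEnum n w ℓ' ε' F)
    (hw : IsPeriodic n w) {m₁ m₂ : ℤ} (hr : IsTransposition n (E m₁) (F m₂) r) (k : ℤ) :
    IsTransposition n (E (m₁ + k)) (F (m₂ + k)) (w ^ k * r * (w ^ k)⁻¹) := by
  simpa only [hE.zpow_apply, hF.zpow_apply] using hr.conj (hw.zpow k)

lemma conj_zpow_eq_conj_zpow_iff (hE : IsOrbitEnum n w ℓ ε E) (hw : IsPeriodic n w)
    {m₁ m₂ : ℤ} (hr : IsTransposition n (E m₁) (E m₂) r) (h₁₂ : m₁ ≠ m₂)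
    (k l : ℤ) : w ^ k * r * (w ^ k)⁻¹ = w ^ l * r * (w ^ l)⁻¹ ↔ (ℓ : ℤ) ∣ k - l := by
  have hconj := hE.isTransposition_conj_zpow hE hw hr
  constructor
  · intro hkl
    have hne : E (m₁ + k) ≠ E (m₂ + k) := fun h => h₁₂ (by simpa using hE.injective h)
    obtain ⟨μ, ⟨h₁, -⟩ | ⟨h₁, h₂⟩⟩ := (hconj l).exists_add_mul_eq (hkl ▸ hconj k) hne
    · rw [hE.add_mul_eq] at h₁
      exact ⟨ε * μ, by linarith [hE.injective h₁]⟩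
    · rw [hE.add_mul_eq] at h₁ h₂
      exact ⟨ε * μ, by linarith [hE.injective h₁, hE.injective h₂]⟩
  · rintro ⟨μ, hμ⟩
    refine (hconj l).add_mul (ε * μ) |>.unique ?_ |>.symm
    rw [← hE.add_mul, ← hE.add_mul, show k = l + ℓ * μ by linarith]
    simpa only [add_assoc] using hconj (l + ℓ * μ)

lemma injective_conj_zpow (hE : IsOrbitEnum n w ℓ ε E) (hF : IsOrbitEnum n w ℓ' ε' F)
    (hw : IsPeriodic n w) (hEF : ∀ m m', ¬ (n : ℤ) ∣ E m - F m') (hsign : (ℓ : ℤ) * ε ≠ ℓ' * ε')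
    {m₁ m₂ : ℤ} (hr : IsTransposition n (E m₁) (F m₂) r) :
    Function.Injective fun k : ℤ => w ^ k * r * (w ^ k)⁻¹ := by
  intro k l (hkl : w ^ k * r * (w ^ k)⁻¹ = w ^ l * r * (w ^ l)⁻¹)
  have hconj := hE.isTransposition_conj_zpow hF hw hr
  have hne : E (m₁ + k) ≠ F (m₂ + k) := fun h => hEF _ _ (by rw [h, sub_self]; exact dvd_zero _)
  obtain ⟨μ, ⟨h₁, h₂⟩ | ⟨h₁, -⟩⟩ := (hconj l).exists_add_mul_eq (hkl ▸ hconj k) hne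
  · rw [hE.add_mul_eq] at h₁
    rw [hF.add_mul_eq] at h₂
    have hμ : ((ℓ : ℤ) * ε - ℓ' * ε') * μ = 0 := by
      linear_combination hF.injective h₂ - hE.injective h₁
    obtain rfl : μ = 0 := (mul_eq_zero.1 hμ).resolve_left (sub_ne_zero.2 hsign)
    simpa using hE.injective h₁
  · exact absurd ⟨μ, by rw [h₁]; ring⟩ (hEF _ _)

end IsOrbitEnum

lemma finite_and_ncard_setOf_exists_eq {α : Type*} (f : ℤ → α) {ℓ : ℕ} (hℓ : 0 < ℓ)
    (hf : ∀ k l, f k = f l ↔ (ℓ : ℤ) ∣ k - l) :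
    {x | ∃ k, x = f k}.Finite ∧ {x | ∃ k, x = f k}.ncard = ℓ := by
  have hset : {x | ∃ k, x = f k} = f '' Set.Ico 0 ℓ := by
    ext x
    constructor
    · rintro ⟨k, rfl⟩
      refine ⟨k % ℓ, ⟨Int.emod_nonneg _ (by omega), Int.emod_lt_of_pos _ (by omega)⟩, ?_⟩
      exact (hf _ _).2 ⟨-(k / ℓ), by linarith [Int.emod_add_mul_ediv k ℓ]⟩
    · rintro ⟨k, -, rfl⟩
      exact ⟨k, rfl⟩
  have hinj : Set.InjOn f (Set.Ico 0 ℓ) := fun k hk l hl hkl => by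
    simp only [Set.mem_Ico] at hk hl
    have := Int.eq_zero_of_abs_lt_dvd ((hf k l).1 hkl) (by rw [abs_sub_lt_iff]; omega)
    omega
  rw [hset, hinj.ncard_image, ← Finset.coe_Ico, Set.ncard_coe_finset]
  exact ⟨Set.toFinite _, by simp⟩

lemma infinite_setOf_exists_eq {α : Type*} {f : ℤ → α} (hf : Function.Injective f) :
    {x | ∃ k, x = f k}.Infinite := by
  simpa only [Set.range, eq_comm] using Set.infinite_range_of_injective hf

lemma pairwise_not_dvd_sub_map_range' {n : ℤ} {s : ℕ} {a : ℕ → ℤ}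
    (hmono : ∀ i j, 1 ≤ i → i < j → j ≤ s → a i < a j)
    (hmem : ∀ i, 1 ≤ i → i ≤ s → 1 ≤ a i ∧ a i ≤ n) :
    ((List.range' 1 s).map a).Pairwise fun x y => ¬ n ∣ x - y := by
  rw [List.pairwise_map]
  refine (List.Pairwise.and_mem.1 (List.pairwise_lt_range' 1)).imp ?_
  rintro i j ⟨hi, hj, hij⟩ h
  rw [List.mem_range'_1] at hi hj
  exact (hmono i j hi.1 hij (by omega)).ne
    (Int.eq_of_dvd_sub_of_mem_Icc (hmem i hi.1 (by omega)) (hmem j hj.1 (by omega)) h)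

namespace CoxeterDecomp

variable {n : ℕ} {c : Equiv.Perm ℤ}

def listX (d : CoxeterDecomp n c) : List ℤ := (List.range' 1 d.s).map d.a

def listXi (d : CoxeterDecomp n c) : List ℤ := ((List.range' 1 d.t).map d.al).reverse

lemma n_ne_zero (d : CoxeterDecomp n c) : n ≠ 0 := by
  have := d.ha_mem 1 le_rfl d.hs
  omega

lemma listX_ne_nil (d : CoxeterDecomp n c) : d.listX ≠ [] := by
  simpa [listX, List.range'_eq_nil_iff] using Nat.one_le_iff_ne_zero.1 d.hs

lemma listXi_ne_nil (d : CoxeterDecomp n c) : d.listXi ≠ [] := by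
  simpa [listXi, List.range'_eq_nil_iff] using Nat.one_le_iff_ne_zero.1 d.ht

lemma not_dvd_sub_of_mem (d : CoxeterDecomp n c) {x y : ℤ} (hx : x ∈ d.listX)
    (hy : y ∈ d.listXi) : ¬ (n : ℤ) ∣ x - y := fun h => by
  simp only [listX, listXi, List.mem_reverse, List.mem_map, List.mem_range'_1] at hx hy
  obtain ⟨p, hp, rfl⟩ := hx
  obtain ⟨q, hq, rfl⟩ := hy
  exact d.hdisj p q hp.1 (by omega) hq.1 (by omega) <|
    Int.eq_of_dvd_sub_of_mem_Icc (d.ha_mem p hp.1 (by omega)) (d.hal_mem q hq.1 (by omega)) h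

lemma isPeriodic (d : CoxeterDecomp n c) : IsPeriodic n c :=
  d.hc ▸ (IsCycleList.isPeriodic (ε := 1) d.hu).mul (IsCycleList.isPeriodic (ε := -1) d.hv)

lemma isOrbitEnum_listX (d : CoxeterDecomp n c) :
    IsOrbitEnum n c d.s 1 (cycleEnum n d.listX 1) := by
  have hpw := pairwise_not_dvd_sub_map_range' d.ha_mono d.ha_mem
  have hE : IsOrbitEnum n d.u d.listX.length 1 (cycleEnum n d.listX 1) :=
    IsCycleList.isOrbitEnum (ε := 1) d.hu d.n_ne_zero d.listX_ne_nil hpw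
  rw [show d.listX.length = d.s by simp [listX]] at hE
  convert hE.mul_right fun m => d.hv.2.2 _ fun y hy =>
    not_dvd_cycleEnum_sub d.listX_ne_nil (fun _ hx _ hy => d.not_dvd_sub_of_mem hx hy) m hy
  exact d.hc

lemma isOrbitEnum_listXi (d : CoxeterDecomp n c) :
    IsOrbitEnum n c d.t (-1) (cycleEnum n d.listXi (-1)) := by
  have hpw := List.pairwise_reverse.2 <|
    (pairwise_not_dvd_sub_map_range' d.hal_mono d.hal_mem).imp fun h h' => h (dvd_sub_comm.1 h')
  have hE : IsOrbitEnum n d.v d.listXi.length (-1) (cycleEnum n d.listXi (-1)) :=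
    IsCycleList.isOrbitEnum (ε := -1) d.hv d.n_ne_zero d.listXi_ne_nil hpw
  rw [show d.listXi.length = d.t by simp [listXi]] at hE
  convert hE.mul_left fun m => d.hu.2.2 _ fun x hx =>
    not_dvd_cycleEnum_sub d.listXi_ne_nil (fun _ hy _ hx => fun h =>
      d.not_dvd_sub_of_mem hx hy (dvd_sub_comm.1 h)) m hx
  exact d.hc

lemma not_dvd_cycleEnum_listX_sub (d : CoxeterDecomp n c) (m m' : ℤ) :
    ¬ (n : ℤ) ∣ cycleEnum n d.listX 1 m - cycleEnum n d.listXi (-1) m' :=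
  not_dvd_cycleEnum_sub_cycleEnum d.listX_ne_nil d.listXi_ne_nil
    (fun _ hx _ hy => d.not_dvd_sub_of_mem hx hy) m m'

lemma exists_eq_cycleEnum_listX (d : CoxeterDecomp n c) {x : ℤ}
    (hx : x ∈ latticeSet n d.s d.a) : ∃ m, x = cycleEnum n d.listX 1 m := by
  obtain ⟨p, hp1, hp2, k, rfl⟩ := hx
  obtain ⟨m, hm⟩ := exists_cycleEnum_eq (n := n) (L := d.listX) 1 (b := d.a p)
    (List.mem_map.2 ⟨p, List.mem_range'_1.2 ⟨hp1, by omega⟩, rfl⟩) k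
  exact ⟨m, hm.symm⟩

lemma exists_eq_cycleEnum_listXi (d : CoxeterDecomp n c) {x : ℤ}
    (hx : x ∈ latticeSet n d.t d.al) : ∃ m, x = cycleEnum n d.listXi (-1) m := by
  obtain ⟨q, hq1, hq2, k, rfl⟩ := hx
  obtain ⟨m, hm⟩ := exists_cycleEnum_eq (n := n) (L := d.listXi) (-1) (b := d.al q)
    (List.mem_reverse.2 (List.mem_map.2 ⟨q, List.mem_range'_1.2 ⟨hq1, by omega⟩, rfl⟩)) k
  exact ⟨m, hm.symm⟩

end CoxeterDecomp

theorem statement15_general (n : ℕ) (c : Equiv.Perm ℤ)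
    (d : CoxeterDecomp n c) (i j : ℤ) (hij : ¬ (n : ℤ) ∣ (i - j))
    (r : Equiv.Perm ℤ) (hr : IsTransposition n i j r) :
    (i ∈ latticeSet n d.s d.a → j ∈ latticeSet n d.s d.a →
      ({r' : Equiv.Perm ℤ | ∃ k : ℤ, r' = c ^ k * r * (c ^ k)⁻¹}.Finite ∧
        {r' : Equiv.Perm ℤ | ∃ k : ℤ, r' = c ^ k * r * (c ^ k)⁻¹}.ncard = d.s)) ∧
    (i ∈ latticeSet n d.t d.al → j ∈ latticeSet n d.t d.al →
      ({r' : Equiv.Perm ℤ | ∃ k : ℤ, r' = c ^ k * r * (c ^ k)⁻¹}.Finite ∧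
        {r' : Equiv.Perm ℤ | ∃ k : ℤ, r' = c ^ k * r * (c ^ k)⁻¹}.ncard = d.t)) ∧
    (((i ∈ latticeSet n d.s d.a ∧ j ∈ latticeSet n d.t d.al) ∨
        (i ∈ latticeSet n d.t d.al ∧ j ∈ latticeSet n d.s d.a)) →
      {r' : Equiv.Perm ℤ | ∃ k : ℤ, r' = c ^ k * r * (c ^ k)⁻¹}.Infinite) := by
  have hne : ∀ {E : ℤ → ℤ} {m₁ m₂ : ℤ}, i = E m₁ → j = E m₂ → m₁ ≠ m₂ := by
    rintro E m₁ m₂ rfl rfl rfl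
    exact hij (by simp)
  have hsign : (d.s : ℤ) * (1 : ℤˣ) ≠ d.t * (-1 : ℤˣ) := by
    have := d.hs
    push_cast
    omega
  refine ⟨fun hi hj => ?_, fun hi hj => ?_, ?_⟩
  · obtain ⟨m₁, rfl⟩ := d.exists_eq_cycleEnum_listX hi
    obtain ⟨m₂, rfl⟩ := d.exists_eq_cycleEnum_listX hj
    exact finite_and_ncard_setOf_exists_eq _ d.hs
      (d.isOrbitEnum_listX.conj_zpow_eq_conj_zpow_iff d.isPeriodic hr (hne rfl rfl))
  · obtain ⟨m₁, rfl⟩ := d.exists_eq_cycleEnum_listXi hi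
    obtain ⟨m₂, rfl⟩ := d.exists_eq_cycleEnum_listXi hj
    exact finite_and_ncard_setOf_exists_eq _ d.ht
      (d.isOrbitEnum_listXi.conj_zpow_eq_conj_zpow_iff d.isPeriodic hr (hne rfl rfl))
  · rintro (⟨hi, hj⟩ | ⟨hi, hj⟩)
    · obtain ⟨m₁, rfl⟩ := d.exists_eq_cycleEnum_listX hi
      obtain ⟨m₂, rfl⟩ := d.exists_eq_cycleEnum_listXi hj
      exact infinite_setOf_exists_eq <| d.isOrbitEnum_listX.injective_conj_zpow
        d.isOrbitEnum_listXi d.isPeriodic d.not_dvd_cycleEnum_listX_sub hsign hr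
    · obtain ⟨m₁, rfl⟩ := d.exists_eq_cycleEnum_listXi hi
      obtain ⟨m₂, rfl⟩ := d.exists_eq_cycleEnum_listX hj
      exact infinite_setOf_exists_eq <| d.isOrbitEnum_listX.injective_conj_zpow
        d.isOrbitEnum_listXi d.isPeriodic d.not_dvd_cycleEnum_listX_sub hsign hr.symm

theorem statement15 (n : ℕ) (hn : 2 ≤ n) (c : Equiv.Perm ℤ) (hcox : IsCoxeter n c)
    (d : CoxeterDecomp n c) (i j : ℤ) (hij : ¬ (n : ℤ) ∣ (i - j))
    (r : Equiv.Perm ℤ) (hr : IsTransposition n i j r) (hdvd : RDvd n r c) :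
    (i ∈ latticeSet n d.s d.a → j ∈ latticeSet n d.s d.a →
      ({r' : Equiv.Perm ℤ | ∃ k : ℤ, r' = c ^ k * r * (c ^ k)⁻¹}.Finite ∧
        {r' : Equiv.Perm ℤ | ∃ k : ℤ, r' = c ^ k * r * (c ^ k)⁻¹}.ncard = d.s)) ∧
    (i ∈ latticeSet n d.t d.al → j ∈ latticeSet n d.t d.al →
      ({r' : Equiv.Perm ℤ | ∃ k : ℤ, r' = c ^ k * r * (c ^ k)⁻¹}.Finite ∧
        {r' : Equiv.Perm ℤ | ∃ k : ℤ, r' = c ^ k * r * (c ^ k)⁻¹}.ncard = d.t)) ∧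
    (((i ∈ latticeSet n d.s d.a ∧ j ∈ latticeSet n d.t d.al) ∨
        (i ∈ latticeSet n d.t d.al ∧ j ∈ latticeSet n d.s d.a)) →
      {r' : Equiv.Perm ℤ | ∃ k : ℤ, r' = c ^ k * r * (c ^ k)⁻¹}.Infinite) :=
  statement15_general n c d i j hij r hr
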